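/- Under the hypotheses that Ĝ has zero row sums, nonpositive off-diagonals, positive diagonal, and ω ∈ (0,1], the weighted Jacobi smoothing update preserves the property that all basis-function values lie in [0,1]: if every entry of P lies in [0,1] and rows of P sum to 1, then every entry of P' = (I - ω D̂^{-1} Ĝ) P lies in [0,1] and rows of P' sum to 1. -/
import Mathlib


open Matrix in
theorem stmt_5 (n m : ℕ) (Ghat : Matrix (Fin n) (Fin n) ℝ)
    (hrow : ∀ i, ∑ j, Ghat i j = 0)
    (hoff : ∀ i j, i ≠ j → Ghat i j ≤ 0)
    (hdiag : ∀ i, 0 < Ghat i i)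
    (ω : ℝ) (hω : 0 < ω) (hω1 : ω ≤ 1)
    (P : Matrix (Fin n) (Fin m) ℝ)
    (hP01 : ∀ i j, P i j ∈ Set.Icc (0 : ℝ) 1)
    (hProw : ∀ i, ∑ j, P i j = 1)
    (P' : Matrix (Fin n) (Fin m) ℝ)
    (hP' : P' = (1 - ω • (Matrix.diagonal (fun i => (Ghat i i)⁻¹) * Ghat)) * P) :
    (∀ i j, P' i j ∈ Set.Icc (0 : ℝ) 1) ∧ (∀ i, ∑ j, P' i j = 1) := by
  set M : Matrix (Fin n) (Fin n) ℝ :=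
    1 - ω • (Matrix.diagonal (fun i => (Ghat i i)⁻¹) * Ghat) with hM
  have hMentry : ∀ i k, M i k = (if i = k then (1:ℝ) else 0) - ω * ((Ghat i i)⁻¹ * Ghat i k) := by
    intro i k
    simp [hM, Matrix.sub_apply, Matrix.one_apply, Matrix.smul_apply, Matrix.diagonal_mul,
      mul_comm]
  have hMnonneg : ∀ i k, 0 ≤ M i k := by
    intro i k
    rw [hMentry]
    rcases eq_or_ne i k with h | h
    · subst h
      have h1 : ω * ((Ghat i i)⁻¹ * Ghat i i) = ω := by
        rw [inv_mul_cancel₀ (ne_of_gt (hdiag i)), mul_one]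
      rw [if_pos rfl, h1]; linarith
    · simp only [if_neg h]
      have h1 : Ghat i k ≤ 0 := hoff i k h
      have h2 : (0:ℝ) ≤ (Ghat i i)⁻¹ := le_of_lt (inv_pos.mpr (hdiag i))
      have h3 : (Ghat i i)⁻¹ * Ghat i k ≤ 0 := mul_nonpos_of_nonneg_of_nonpos h2 h1
      have h4 : ω * ((Ghat i i)⁻¹ * Ghat i k) ≤ 0 :=
        mul_nonpos_of_nonneg_of_nonpos (le_of_lt hω) h3
      linarith
  have hMrow : ∀ i, ∑ k, M i k = 1 := by
    intro i
    have : ∑ k, M i k = (∑ k, if i = k then (1:ℝ) else 0)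
        - ω * ((Ghat i i)⁻¹ * ∑ k, Ghat i k) := by
      simp only [hMentry]
      rw [Finset.sum_sub_distrib, Finset.mul_sum, Finset.mul_sum]
    rw [this, hrow i]
    simp
  have hP'entry : ∀ i j, P' i j = ∑ k, M i k * P k j := by
    intro i j
    rw [hP']
    rfl
  constructor
  · intro i j
    constructor
    · rw [hP'entry]
      exact Finset.sum_nonneg fun k _ => mul_nonneg (hMnonneg i k) (hP01 k j).1
    · rw [hP'entry]
      calc ∑ k, M i k * P k j ≤ ∑ k, M i k * 1 :=
            Finset.sum_le_sum fun k _ => mul_le_mul_of_nonneg_left (hP01 k j).2 (hMnonneg i k)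
        _ = 1 := by simp [hMrow i]
  · intro i
    have : ∑ j, P' i j = ∑ k, M i k * ∑ j, P k j := by
      simp only [hP'entry]
      rw [Finset.sum_comm]
      simp [Finset.mul_sum]
    rw [this]
    simp only [hProw]
    simp [hMrow i]
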